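/- Let 0 ≤ B < A ≤ 1, c ≥ 0, and K ≥ c(1+A)(1+B)/(4(A-B)) - (1-B)/(1+B). Set β = (1-B)/(1+B), so 0 < β ≤ 1. Then for every t ≥ β², t·(-(K/2) - β/2 + c(1+A)(1+B)/(8(A-B))) - (K/2)(1-β²) - β(1-β²)²/(2t) - β(1-β²) ≤ 0. -/

import Mathlib

/-! With `D = c(1+A)(1+B)/(4(A-B)) ≥ 0` the hypothesis on `K` reads `K + β ≥ D`. The expression
splits as `-(t/2)(K + β - D) - (K/2 + β)(1 - β²) - β(1 - β²)²/(2t)`, and each of the three terms is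
nonpositive because `0 ≤ β ≤ 1`, `K + β ≥ 0` and `t ≥ 0`. -/

theorem substituted_bound_nonpos {β D K t : ℝ} (hβ0 : 0 ≤ β) (hβ1 : β ≤ 1) (hD : 0 ≤ D)
    (hK : D - β ≤ K) (ht : 0 ≤ t) :
    t * (-(K / 2) - β / 2 + D / 2) - (K / 2) * (1 - β ^ 2) - β * (1 - β ^ 2) ^ 2 / (2 * t)
      - β * (1 - β ^ 2) ≤ 0 := by
  have hlinear : t * (-(K / 2) - β / 2 + D / 2) ≤ 0 :=
    mul_nonpos_of_nonneg_of_nonpos ht (by linarith)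
  have hconst : 0 ≤ (K / 2 + β) * (1 - β ^ 2) :=
    mul_nonneg (by linarith) (by nlinarith)
  have hrecip : 0 ≤ β * (1 - β ^ 2) ^ 2 / (2 * t) := by positivity
  linarith

theorem stmt_7 (A B c K : ℝ) (hB : 0 ≤ B) (hBA : B < A) (hA : A ≤ 1) (hc : 0 ≤ c)
    (hK : K ≥ c * (1 + A) * (1 + B) / (4 * (A - B)) - (1 - B) / (1 + B))
    (β : ℝ) (hβ : β = (1 - B) / (1 + B)) :
    ∀ t : ℝ, t ≥ β ^ 2 →
      t * (-(K / 2) - β / 2 + c * (1 + A) * (1 + B) / (8 * (A - B))) -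
          (K / 2) * (1 - β ^ 2) - β * (1 - β ^ 2) ^ 2 / (2 * t) - β * (1 - β ^ 2) ≤ 0 := by
  intro t ht
  have hAB : 0 < A - B := by linarith
  have hβ0 : 0 ≤ β := hβ ▸ div_nonneg (by linarith) (by linarith)
  have hβ1 : β ≤ 1 := by rw [hβ, div_le_one (by linarith)]; linarith
  have hD : 0 ≤ c * (1 + A) * (1 + B) / (4 * (A - B)) :=
    div_nonneg (mul_nonneg (mul_nonneg hc (by linarith)) (by linarith)) (by linarith)
  have hhalf : c * (1 + A) * (1 + B) / (8 * (A - B))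
      = c * (1 + A) * (1 + B) / (4 * (A - B)) / 2 := by
    rw [div_div]; ring_nf
  rw [hhalf]
  exact substituted_bound_nonpos hβ0 hβ1 hD (by rw [← hβ] at hK; linarith)
    ((sq_nonneg β).trans ht)
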